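/- Let u, v : ℝ² → ℝ be smooth functions of (x,t) solving the KKS system, and suppose there is a compact set K ⊆ ℝ such that for every t the functions x ↦ u(x,t) and x ↦ v(x,t) are supported in K. Then the function t ↦ ∫_ℝ [(7/162)v³ − (8/3)u³ − (5/9)v²u + (20/9)u²v − (u_x)² + (5/9)u_x v_x − (2/27)(v_x)²] dx is constant; that is, the functional ℋ₂ = ∫ H₂ dx is a conserved quantity of the KKS system. -/

import Mathlib

open MeasureTheory Function

namespace KKS6

noncomputable def D1 (f : ℝ × ℝ → ℝ) : ℝ × ℝ → ℝ := fun p => fderiv ℝ f p (1, 0)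
noncomputable def D2 (f : ℝ × ℝ → ℝ) : ℝ × ℝ → ℝ := fun p => fderiv ℝ f p (0, 1)

lemma contDiff_D1 {f : ℝ × ℝ → ℝ} (hf : ContDiff ℝ (⊤ : ℕ∞) f) : ContDiff ℝ (⊤ : ℕ∞) (D1 f) :=
  (hf.fderiv_right (by simp)).clm_apply contDiff_const

lemma contDiff_D2 {f : ℝ × ℝ → ℝ} (hf : ContDiff ℝ (⊤ : ℕ∞) f) : ContDiff ℝ (⊤ : ℕ∞) (D2 f) :=
  (hf.fderiv_right (by simp)).clm_apply contDiff_const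

lemma hasDerivAt_sliceX {f : ℝ × ℝ → ℝ} (hf : ContDiff ℝ (⊤ : ℕ∞) f) (x t : ℝ) :
    HasDerivAt (fun y => f (y, t)) (D1 f (x, t)) x := by
  have h1 : HasDerivAt (fun y : ℝ => ((y, t) : ℝ × ℝ)) ((1 : ℝ), (0 : ℝ)) x :=
    HasDerivAt.prodMk (hasDerivAt_id x) (hasDerivAt_const x t)
  exact ((hf.differentiable (by simp) (x, t)).hasFDerivAt.comp_hasDerivAt x h1 :)

lemma hasDerivAt_sliceT {f : ℝ × ℝ → ℝ} (hf : ContDiff ℝ (⊤ : ℕ∞) f) (x t : ℝ) :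
    HasDerivAt (fun s => f (x, s)) (D2 f (x, t)) t := by
  have h1 : HasDerivAt (fun s : ℝ => ((x, s) : ℝ × ℝ)) ((0 : ℝ), (1 : ℝ)) t :=
    HasDerivAt.prodMk (hasDerivAt_const t x) (hasDerivAt_id t)
  exact ((hf.differentiable (by simp) (x, t)).hasFDerivAt.comp_hasDerivAt t h1 :)

lemma D2_D1_comm {f : ℝ × ℝ → ℝ} (hf : ContDiff ℝ (⊤ : ℕ∞) f) (p : ℝ × ℝ) :
    D2 (D1 f) p = D1 (D2 f) p := by
  have hd : ∀ y, HasFDerivAt f (fderiv ℝ f y) y :=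
    fun y => (hf.differentiable (by simp) y).hasFDerivAt
  have hf' : ContDiff ℝ (⊤ : ℕ∞) (fderiv ℝ f) := hf.fderiv_right (by simp)
  have hx : HasFDerivAt (fderiv ℝ f) (fderiv ℝ (fderiv ℝ f) p) p :=
    (hf'.differentiable (by simp) p).hasFDerivAt
  have hsymm := second_derivative_symmetric hd hx ((1:ℝ), (0:ℝ)) ((0:ℝ), (1:ℝ))
  have e1 : HasFDerivAt (D1 f)
      ((ContinuousLinearMap.apply ℝ ℝ ((1:ℝ),(0:ℝ))).comp (fderiv ℝ (fderiv ℝ f) p)) p :=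
    (ContinuousLinearMap.apply ℝ ℝ ((1:ℝ),(0:ℝ))).hasFDerivAt.comp p hx
  have e2 : HasFDerivAt (D2 f)
      ((ContinuousLinearMap.apply ℝ ℝ ((0:ℝ),(1:ℝ))).comp (fderiv ℝ (fderiv ℝ f) p)) p :=
    (ContinuousLinearMap.apply ℝ ℝ ((0:ℝ),(1:ℝ))).hasFDerivAt.comp p hx
  simp only [D1, D2]
  rw [e1.fderiv, e2.fderiv]
  simpa using hsymm.symm

noncomputable def DX (f : ℝ × ℝ → ℝ) : ℕ → ℝ × ℝ → ℝ
  | 0 => f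
  | k + 1 => D1 (DX f k)

lemma contDiff_DX {f : ℝ × ℝ → ℝ} (hf : ContDiff ℝ (⊤ : ℕ∞) f) (k : ℕ) :
    ContDiff ℝ (⊤ : ℕ∞) (DX f k) := by
  induction k with
  | zero => exact hf
  | succ k ih => exact contDiff_D1 ih

lemma hasDerivAt_DX {f : ℝ × ℝ → ℝ} (hf : ContDiff ℝ (⊤ : ℕ∞) f) (k : ℕ) (x t : ℝ) :
    HasDerivAt (fun y => DX f k (y, t)) (DX f (k + 1) (x, t)) x :=
  hasDerivAt_sliceX (contDiff_DX hf k) x t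

lemma deriv_DX {f : ℝ × ℝ → ℝ} (hf : ContDiff ℝ (⊤ : ℕ∞) f) (k : ℕ) (t : ℝ) :
    deriv (fun y => DX f k (y, t)) = fun x => DX f (k + 1) (x, t) :=
  funext fun x => (hasDerivAt_DX hf k x t).deriv

lemma iteratedDeriv_three {f : ℝ × ℝ → ℝ} (hf : ContDiff ℝ (⊤ : ℕ∞) f) (x t : ℝ) :
    iteratedDeriv 3 (fun y => f (y, t)) x = DX f 3 (x, t) := by
  have h0 : (fun y => f (y, t)) = fun y => DX f 0 (y, t) := rfl
  rw [iteratedDeriv_succ', h0, deriv_DX hf 0, iteratedDeriv_succ', deriv_DX hf 1,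
    iteratedDeriv_succ', deriv_DX hf 2, iteratedDeriv_zero]

lemma D2_DX_comm {f : ℝ × ℝ → ℝ} (hf : ContDiff ℝ (⊤ : ℕ∞) f) (k : ℕ) (p : ℝ × ℝ) :
    D2 (DX f (k + 1)) p = D1 (D2 (DX f k)) p :=
  D2_D1_comm (contDiff_DX hf k) p

lemma DX_zero_of_support {f : ℝ × ℝ → ℝ} (hf : ContDiff ℝ (⊤ : ℕ∞) f) {K : Set ℝ} (hK : IsClosed K)
    (hsupp : ∀ t x, x ∉ K → f (x, t) = 0) (k : ℕ) :
    ∀ t x, x ∉ K → DX f k (x, t) = 0 := by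
  induction k with
  | zero => exact fun t x hx => hsupp t x hx
  | succ k ih =>
    intro t x hx
    have hev : (fun y => DX f k (y, t)) =ᶠ[nhds x] (fun _ => (0:ℝ)) := by
      filter_upwards [hK.isOpen_compl.mem_nhds hx] with y hy
      exact ih t y hy
    have h2 : DX f (k+1) (x, t) = deriv (fun y => DX f k (y, t)) x :=
      (hasDerivAt_DX hf k x t).deriv.symm
    rw [h2, hev.deriv_eq]
    simp

noncomputable def RHSu (f g : ℝ × ℝ → ℝ) (p : ℝ × ℝ) : ℝ :=
  (-12 : ℝ) * (DX f 0 p * DX f 1 p) + (2 : ℝ) * (DX f 0 p * DX g 1 p) + (1 : ℝ) * (DX f 1 p * DX g 0 p) + (4 : ℝ) * (DX f 3 p) + (-1 : ℝ) * (DX g 3 p)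

noncomputable def RHSv (f g : ℝ × ℝ → ℝ) (p : ℝ × ℝ) : ℝ :=
  (-6 : ℝ) * (DX f 0 p * DX g 1 p) + (-12 : ℝ) * (DX f 1 p * DX g 0 p) + (9 : ℝ) * (DX f 3 p) + (4 : ℝ) * (DX g 0 p * DX g 1 p) + (-2 : ℝ) * (DX g 3 p)

noncomputable def RHSu1 (f g : ℝ × ℝ → ℝ) (p : ℝ × ℝ) : ℝ :=
  (-12 : ℝ) * (DX f 0 p * DX f 2 p) + (2 : ℝ) * (DX f 0 p * DX g 2 p) + (-12 : ℝ) * (DX f 1 p * DX f 1 p) + (3 : ℝ) * (DX f 1 p * DX g 1 p) + (1 : ℝ) * (DX f 2 p * DX g 0 p) + (4 : ℝ) * (DX f 4 p) + (-1 : ℝ) * (DX g 4 p)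

noncomputable def RHSv1 (f g : ℝ × ℝ → ℝ) (p : ℝ × ℝ) : ℝ :=
  (-6 : ℝ) * (DX f 0 p * DX g 2 p) + (-18 : ℝ) * (DX f 1 p * DX g 1 p) + (-12 : ℝ) * (DX f 2 p * DX g 0 p) + (9 : ℝ) * (DX f 4 p) + (4 : ℝ) * (DX g 0 p * DX g 2 p) + (4 : ℝ) * (DX g 1 p * DX g 1 p) + (-2 : ℝ) * (DX g 4 p)

noncomputable def HD (f g : ℝ × ℝ → ℝ) (p : ℝ × ℝ) : ℝ :=
  ((-8 : ℝ)/3) * (DX f 0 p * DX f 0 p * DX f 0 p) + ((20 : ℝ)/9) * (DX f 0 p * DX f 0 p * DX g 0 p) + ((-5 : ℝ)/9) * (DX f 0 p * DX g 0 p * DX g 0 p) + (-1 : ℝ) * (DX f 1 p * DX f 1 p) + ((5 : ℝ)/9) * (DX f 1 p * DX g 1 p) + ((7 : ℝ)/162) * (DX g 0 p * DX g 0 p * DX g 0 p) + ((-2 : ℝ)/27) * (DX g 1 p * DX g 1 p)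

noncomputable def GF (f g : ℝ × ℝ → ℝ) (p : ℝ × ℝ) : ℝ :=
  (24 : ℝ) * (DX f 0 p * DX f 0 p * DX f 0 p * DX f 0 p) + ((-88 : ℝ)/3) * (DX f 0 p * DX f 0 p * DX f 0 p * DX g 0 p) + (-12 : ℝ) * (DX f 0 p * DX f 0 p * DX f 2 p) + ((110 : ℝ)/9) * (DX f 0 p * DX f 0 p * DX g 0 p * DX g 0 p) + ((32 : ℝ)/9) * (DX f 0 p * DX f 0 p * DX g 2 p) + (24 : ℝ) * (DX f 0 p * DX f 1 p * DX f 1 p) + ((-130 : ℝ)/9) * (DX f 0 p * DX f 1 p * DX g 1 p) + ((70 : ℝ)/9) * (DX f 0 p * DX f 2 p * DX g 0 p) + ((-19 : ℝ)/9) * (DX f 0 p * DX g 0 p * DX g 0 p * DX g 0 p) + ((-20 : ℝ)/9) * (DX f 0 p * DX g 0 p * DX g 2 p) + ((19 : ℝ)/9) * (DX f 0 p * DX g 1 p * DX g 1 p) + ((-74 : ℝ)/9) * (DX f 1 p * DX f 1 p * DX g 0 p) + (-3 : ℝ) * (DX f 1 p * DX f 3 p) + ((40 : ℝ)/9) * (DX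 f 1 p * DX g 0 p * DX g 1 p) + ((8 : ℝ)/9) * (DX f 1 p * DX g 3 p) + ((3 : ℝ)/2) * (DX f 2 p * DX f 2 p) + ((-19 : ℝ)/18) * (DX f 2 p * DX g 0 p * DX g 0 p) + ((-8 : ℝ)/9) * (DX f 2 p * DX g 2 p) + ((8 : ℝ)/9) * (DX f 3 p * DX g 1 p) + ((7 : ℝ)/54) * (DX g 0 p * DX g 0 p * DX g 0 p * DX g 0 p) + ((8 : ℝ)/27) * (DX g 0 p * DX g 0 p * DX g 2 p) + ((-16 : ℝ)/27) * (DX g 0 p * DX g 1 p * DX g 1 p) + ((-7 : ℝ)/27) * (DX g 1 p * DX g 3 p) + ((7 : ℝ)/54) * (DX g 2 p * DX g 2 p)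

noncomputable def WDF (f g : ℝ × ℝ → ℝ) (p : ℝ × ℝ) : ℝ :=
  (96 : ℝ) * (DX f 0 p * DX f 0 p * DX f 0 p * DX f 1 p) + ((-88 : ℝ)/3) * (DX f 0 p * DX f 0 p * DX f 0 p * DX g 1 p) + (-88 : ℝ) * (DX f 0 p * DX f 0 p * DX f 1 p * DX g 0 p) + (-12 : ℝ) * (DX f 0 p * DX f 0 p * DX f 3 p) + ((220 : ℝ)/9) * (DX f 0 p * DX f 0 p * DX g 0 p * DX g 1 p) + ((32 : ℝ)/9) * (DX f 0 p * DX f 0 p * DX g 3 p) + (24 : ℝ) * (DX f 0 p * DX f 1 p * DX f 2 p) + ((220 : ℝ)/9) * (DX f 0 p * DX f 1 p * DX g 0 p * DX g 0 p) + ((-22 : ℝ)/3) * (DX f 0 p * DX f 1 p * DX g 2 p) + ((-20 : ℝ)/3) * (DX f 0 p * DX f 2 p * DX g 1 p) + ((70 : ℝ)/9) * (DX f 0 p * DX f 3 p * DX g 0 p) + ((-19 : ℝ)/3) * (DX f 0 p * DX g 0 p * DX g 0 p * DX g 1 p) + ((-20 : ℝ)/9) * (DX f 0 p * DX g 0 p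 * DX g 3 p) + (2 : ℝ) * (DX f 0 p * DX g 1 p * DX g 2 p) + (24 : ℝ) * (DX f 1 p * DX f 1 p * DX f 1 p) + ((-68 : ℝ)/3) * (DX f 1 p * DX f 1 p * DX g 1 p) + ((-26 : ℝ)/3) * (DX f 1 p * DX f 2 p * DX g 0 p) + (-3 : ℝ) * (DX f 1 p * DX f 4 p) + ((-19 : ℝ)/9) * (DX f 1 p * DX g 0 p * DX g 0 p * DX g 0 p) + ((20 : ℝ)/9) * (DX f 1 p * DX g 0 p * DX g 2 p) + ((59 : ℝ)/9) * (DX f 1 p * DX g 1 p * DX g 1 p) + ((8 : ℝ)/9) * (DX f 1 p * DX g 4 p) + ((7 : ℝ)/3) * (DX f 2 p * DX g 0 p * DX g 1 p) + ((-19 : ℝ)/18) * (DX f 3 p * DX g 0 p * DX g 0 p) + ((8 : ℝ)/9) * (DX f 4 p * DX g 1 p) + ((14 : ℝ)/27) * (DX g 0 p * DX g 0 p * DX g 0 p * DX g 1 p) + ((8 : ℝ)/27) * (DX g 0 p * DX g 0 p * DX g 3 p) + ((-16 : ℝ)/27) * (DX g 0 p * DX g 1 p * DX g 2 p) + ((-16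 : ℝ)/27) * (DX g 1 p * DX g 1 p * DX g 1 p) + ((-7 : ℝ)/27) * (DX g 1 p * DX g 4 p)

section Main
variable {f g : ℝ × ℝ → ℝ} (hf : ContDiff ℝ (⊤ : ℕ∞) f) (hg : ContDiff ℝ (⊤ : ℕ∞) g)

include hf hg

lemma smooth_RHSu : ContDiff ℝ (⊤ : ℕ∞) (RHSu f g) :=
  (((((contDiff_const.mul ((contDiff_DX hf 0).mul (contDiff_DX hf 1))).add (contDiff_const.mul ((contDiff_DX hf 0).mul (contDiff_DX hg 1)))).add (contDiff_const.mul ((contDiff_DX hf 1).mul (contDiff_DX hg 0)))).add (contDiff_const.mul (contDiff_DX hf 3))).add (contDiff_const.mul (contDiff_DX hg 3)))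

lemma smooth_RHSv : ContDiff ℝ (⊤ : ℕ∞) (RHSv f g) :=
  (((((contDiff_const.mul ((contDiff_DX hf 0).mul (contDiff_DX hg 1))).add (contDiff_const.mul ((contDiff_DX hf 1).mul (contDiff_DX hg 0)))).add (contDiff_const.mul (contDiff_DX hf 3))).add (contDiff_const.mul ((contDiff_DX hg 0).mul (contDiff_DX hg 1)))).add (contDiff_const.mul (contDiff_DX hg 3)))

lemma smooth_HD : ContDiff ℝ (⊤ : ℕ∞) (HD f g) :=
  (((((((contDiff_const.mul (((contDiff_DX hf 0).mul (contDiff_DX hf 0)).mul (contDiff_DX hf 0))).add (contDiff_const.mul (((contDiff_DX hf 0).mul (contDiff_DX hf 0)).mul (contDiff_DX hg 0)))).add (contDiff_const.mul (((contDiff_DX hf 0).mul (contDiff_DX hg 0)).mul (contDiff_DX hg 0)))).add (contDiff_const.mul ((contDiff_DX hf 1).mul (contDiff_DX hf 1)))).add (contDiff_const.mul ((contDiff_DX hf 1).mul (contDiff_DX hg 1)))).add (contDiff_const.mul (((contDiff_DX hg 0).mul (contDiff_DX hg 0)).mul (contDiff_DX hg 0)))).add (contDiff_const.mul ((contDiff_DX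 hg 1).mul (contDiff_DX hg 1))))

lemma smooth_WDF : ContDiff ℝ (⊤ : ℕ∞) (WDF f g) :=
  ((((((((((((((((((((((((((((((contDiff_const.mul ((((contDiff_DX hf 0).mul (contDiff_DX hf 0)).mul (contDiff_DX hf 0)).mul (contDiff_DX hf 1))).add (contDiff_const.mul ((((contDiff_DX hf 0).mul (contDiff_DX hf 0)).mul (contDiff_DX hf 0)).mul (contDiff_DX hg 1)))).add (contDiff_const.mul ((((contDiff_DX hf 0).mul (contDiff_DX hf 0)).mul (contDiff_DX hf 1)).mul (contDiff_DX hg 0)))).add (contDiff_const.mul (((contDiff_DX hf 0).mul (contDiff_DX hf 0)).mul (contDiff_DX hf 3)))).add (contDiff_const.mul ((((contDiff_DX hf 0).mul (contDiff_DX hf 0)).mul (contDiff_DX hg 0)).mul (contDiff_DX hg 1)))).add (contDiff_const.mul (((contDiff_DX hf 0).mul (contDiff_DX hf 0)).mul (contDiff_DX hg 3)))).add (contDiff_const.mul (((contDiff_DX hf 0).mul (contDiff_DX hf 1)).mul (contDiff_DX hf 2)))).add (contDiff_const.mul ((((contDiff_DX hf 0).mul (contDiff_DX hf 1)).mul (contDiff_DX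 hg 0)).mul (contDiff_DX hg 0)))).add (contDiff_const.mul (((contDiff_DX hf 0).mul (contDiff_DX hf 1)).mul (contDiff_DX hg 2)))).add (contDiff_const.mul (((contDiff_DX hf 0).mul (contDiff_DX hf 2)).mul (contDiff_DX hg 1)))).add (contDiff_const.mul (((contDiff_DX hf 0).mul (contDiff_DX hf 3)).mul (contDiff_DX hg 0)))).add (contDiff_const.mul ((((contDiff_DX hf 0).mul (contDiff_DX hg 0)).mul (contDiff_DX hg 0)).mul (contDiff_DX hg 1)))).add (contDiff_const.mul (((contDiff_DX hf 0).mul (contDiff_DX hg 0)).mul (contDiff_DX hg 3)))).add (contDiff_const.mul (((contDiff_DX hf 0).mul (contDiff_DX hg 1)).mul (contDiff_DX hg 2)))).add (contDiff_const.mul (((contDiff_DX hf 1).mul (contDiff_DX hf 1)).mul (contDiff_DX hf 1)))).add (contDiff_const.mul (((contDiff_DX hf 1).mul (contDiff_DX hf 1)).mul (contDiff_DX hg 1)))).add (contDiff_const.mul (((contDiff_DX hf 1).mul (contDiff_DX hf 2)).mul (contDiff_DX hg 0)))).add (contDiff_const.mul ((contDiff_DX hf 1).mul (contDiff_DX hf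 4)))).add (contDiff_const.mul ((((contDiff_DX hf 1).mul (contDiff_DX hg 0)).mul (contDiff_DX hg 0)).mul (contDiff_DX hg 0)))).add (contDiff_const.mul (((contDiff_DX hf 1).mul (contDiff_DX hg 0)).mul (contDiff_DX hg 2)))).add (contDiff_const.mul (((contDiff_DX hf 1).mul (contDiff_DX hg 1)).mul (contDiff_DX hg 1)))).add (contDiff_const.mul ((contDiff_DX hf 1).mul (contDiff_DX hg 4)))).add (contDiff_const.mul (((contDiff_DX hf 2).mul (contDiff_DX hg 0)).mul (contDiff_DX hg 1)))).add (contDiff_const.mul (((contDiff_DX hf 3).mul (contDiff_DX hg 0)).mul (contDiff_DX hg 0)))).add (contDiff_const.mul ((contDiff_DX hf 4).mul (contDiff_DX hg 1)))).add (contDiff_const.mul ((((contDiff_DX hg 0).mul (contDiff_DX hg 0)).mul (contDiff_DX hg 0)).mul (contDiff_DX hg 1)))).add (contDiff_const.mul (((contDiff_DX hg 0).mul (contDiff_DX hg 0)).mul (contDiff_DX hg 3)))).add (contDiff_const.mul (((contDiff_DX hg 0).mul (contDiff_DX hg 1)).mul (contDiff_DX hg 2)))).add (contDiff_const.mul (((contDiff_DX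 hg 1).mul (contDiff_DX hg 1)).mul (contDiff_DX hg 1)))).add (contDiff_const.mul ((contDiff_DX hg 1).mul (contDiff_DX hg 4))))

lemma smooth_GF : ContDiff ℝ (⊤ : ℕ∞) (GF f g) :=
  ((((((((((((((((((((((((contDiff_const.mul ((((contDiff_DX hf 0).mul (contDiff_DX hf 0)).mul (contDiff_DX hf 0)).mul (contDiff_DX hf 0))).add (contDiff_const.mul ((((contDiff_DX hf 0).mul (contDiff_DX hf 0)).mul (contDiff_DX hf 0)).mul (contDiff_DX hg 0)))).add (contDiff_const.mul (((contDiff_DX hf 0).mul (contDiff_DX hf 0)).mul (contDiff_DX hf 2)))).add (contDiff_const.mul ((((contDiff_DX hf 0).mul (contDiff_DX hf 0)).mul (contDiff_DX hg 0)).mul (contDiff_DX hg 0)))).add (contDiff_const.mul (((contDiff_DX hf 0).mul (contDiff_DX hf 0)).mul (contDiff_DX hg 2)))).add (contDiff_const.mul (((contDiff_DX hf 0).mul (contDiff_DX hf 1)).mul (contDiff_DX hf 1)))).add (contDiff_const.mul (((contDiff_DX hf 0).mul (contDiff_DX hf 1)).mul (contDiff_DX hg 1)))).add (contDiff_const.mul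 (((contDiff_DX hf 0).mul (contDiff_DX hf 2)).mul (contDiff_DX hg 0)))).add (contDiff_const.mul ((((contDiff_DX hf 0).mul (contDiff_DX hg 0)).mul (contDiff_DX hg 0)).mul (contDiff_DX hg 0)))).add (contDiff_const.mul (((contDiff_DX hf 0).mul (contDiff_DX hg 0)).mul (contDiff_DX hg 2)))).add (contDiff_const.mul (((contDiff_DX hf 0).mul (contDiff_DX hg 1)).mul (contDiff_DX hg 1)))).add (contDiff_const.mul (((contDiff_DX hf 1).mul (contDiff_DX hf 1)).mul (contDiff_DX hg 0)))).add (contDiff_const.mul ((contDiff_DX hf 1).mul (contDiff_DX hf 3)))).add (contDiff_const.mul (((contDiff_DX hf 1).mul (contDiff_DX hg 0)).mul (contDiff_DX hg 1)))).add (contDiff_const.mul ((contDiff_DX hf 1).mul (contDiff_DX hg 3)))).add (contDiff_const.mul ((contDiff_DX hf 2).mul (contDiff_DX hf 2)))).add (contDiff_const.mul (((contDiff_DX hf 2).mul (contDiff_DX hg 0)).mul (contDiff_DX hg 0)))).add (contDiff_const.mul ((contDiff_DX hf 2).mul (contDiff_DX hg 2)))).add (contDiff_const.mul ((contDiff_DX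 hf 3).mul (contDiff_DX hg 1)))).add (contDiff_const.mul ((((contDiff_DX hg 0).mul (contDiff_DX hg 0)).mul (contDiff_DX hg 0)).mul (contDiff_DX hg 0)))).add (contDiff_const.mul (((contDiff_DX hg 0).mul (contDiff_DX hg 0)).mul (contDiff_DX hg 2)))).add (contDiff_const.mul (((contDiff_DX hg 0).mul (contDiff_DX hg 1)).mul (contDiff_DX hg 1)))).add (contDiff_const.mul ((contDiff_DX hg 1).mul (contDiff_DX hg 3)))).add (contDiff_const.mul ((contDiff_DX hg 2).mul (contDiff_DX hg 2))))

lemma eqD2DXu1 (hft : ∀ p, D2 (DX f 0) p = RHSu f g p) :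
    ∀ p, D2 (DX f 1) p = RHSu1 f g p := by
  rintro ⟨x, t⟩
  have hc : D2 (DX f 1) (x, t) = D1 (D2 (DX f 0)) (x, t) := D2_DX_comm hf 0 (x, t)
  rw [hc, show D2 (DX f 0) = RHSu f g from funext hft,
    show D1 (RHSu f g) (x, t) = deriv (fun y => RHSu f g (y, t)) x from
      (hasDerivAt_sliceX (smooth_RHSu hf hg) x t).deriv.symm]
  have h : HasDerivAt (fun y => RHSu f g (y, t)) _ x :=
    (((((HasDerivAt.const_mul (-12 : ℝ) ((hasDerivAt_DX hf 0 x t).mul (hasDerivAt_DX hf 1 x t))).add (HasDerivAt.const_mul (2 : ℝ) ((hasDerivAt_DX hf 0 x t).mul (hasDerivAt_DX hg 1 x t)))).add (HasDerivAt.const_mul (1 : ℝ) ((hasDerivAt_DX hf 1 x t).mul (hasDerivAt_DX hg 0 x t)))).add (HasDerivAt.const_mul (4 : ℝ) (hasDerivAt_DX hf 3 x t))).add (HasDerivAt.const_mul (-1 : ℝ) (hasDerivAt_DX hg 3 x t)))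
  rw [h.deriv]
  simp only [RHSu1, Nat.reduceAdd]
  ring

lemma eqD2DXv1 (hgt : ∀ p, D2 (DX g 0) p = RHSv f g p) :
    ∀ p, D2 (DX g 1) p = RHSv1 f g p := by
  rintro ⟨x, t⟩
  have hc : D2 (DX g 1) (x, t) = D1 (D2 (DX g 0)) (x, t) := D2_DX_comm hg 0 (x, t)
  rw [hc, show D2 (DX g 0) = RHSv f g from funext hgt,
    show D1 (RHSv f g) (x, t) = deriv (fun y => RHSv f g (y, t)) x from
      (hasDerivAt_sliceX (smooth_RHSv hf hg) x t).deriv.symm]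
  have h : HasDerivAt (fun y => RHSv f g (y, t)) _ x :=
    (((((HasDerivAt.const_mul (-6 : ℝ) ((hasDerivAt_DX hf 0 x t).mul (hasDerivAt_DX hg 1 x t))).add (HasDerivAt.const_mul (-12 : ℝ) ((hasDerivAt_DX hf 1 x t).mul (hasDerivAt_DX hg 0 x t)))).add (HasDerivAt.const_mul (9 : ℝ) (hasDerivAt_DX hf 3 x t))).add (HasDerivAt.const_mul (4 : ℝ) ((hasDerivAt_DX hg 0 x t).mul (hasDerivAt_DX hg 1 x t)))).add (HasDerivAt.const_mul (-2 : ℝ) (hasDerivAt_DX hg 3 x t)))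
  rw [h.deriv]
  simp only [RHSv1, Nat.reduceAdd]
  ring

lemma key1 (hft : ∀ p, D2 (DX f 0) p = RHSu f g p)
    (hgt : ∀ p, D2 (DX g 0) p = RHSv f g p) (x t : ℝ) :
    HasDerivAt (fun s => HD f g (x, s)) (WDF f g (x, t)) t := by
  have h : HasDerivAt (fun s => HD f g (x, s)) _ t :=
    (((((((HasDerivAt.const_mul ((-8 : ℝ)/3) (((hasDerivAt_sliceT (contDiff_DX hf 0) x t).mul (hasDerivAt_sliceT (contDiff_DX hf 0) x t)).mul (hasDerivAt_sliceT (contDiff_DX hf 0) x t))).add (HasDerivAt.const_mul ((20 : ℝ)/9) (((hasDerivAt_sliceT (contDiff_DX hf 0) x t).mul (hasDerivAt_sliceT (contDiff_DX hf 0) x t)).mul (hasDerivAt_sliceT (contDiff_DX hg 0) x t)))).add (HasDerivAt.const_mul ((-5 : ℝ)/9) (((hasDerivAt_sliceT (contDiff_DX hf 0) x t).mul (hasDerivAt_sliceT (contDiff_DX hg 0) x t)).mul (hasDerivAt_sliceT (contDiff_DX hg 0) x t)))).add (HasDerivAt.const_mul (-1 : ℝ) ((hasDerivAt_sliceT (contDiff_DX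 hf 1) x t).mul (hasDerivAt_sliceT (contDiff_DX hf 1) x t)))).add (HasDerivAt.const_mul ((5 : ℝ)/9) ((hasDerivAt_sliceT (contDiff_DX hf 1) x t).mul (hasDerivAt_sliceT (contDiff_DX hg 1) x t)))).add (HasDerivAt.const_mul ((7 : ℝ)/162) (((hasDerivAt_sliceT (contDiff_DX hg 0) x t).mul (hasDerivAt_sliceT (contDiff_DX hg 0) x t)).mul (hasDerivAt_sliceT (contDiff_DX hg 0) x t)))).add (HasDerivAt.const_mul ((-2 : ℝ)/27) ((hasDerivAt_sliceT (contDiff_DX hg 1) x t).mul (hasDerivAt_sliceT (contDiff_DX hg 1) x t))))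
  have e : deriv (fun s => HD f g (x, s)) t = WDF f g (x, t) := by
    rw [h.deriv]
    rw [hft (x, t), hgt (x, t), eqD2DXu1 hf hg hft (x, t), eqD2DXv1 hf hg hgt (x, t)]
    simp only [RHSu, RHSv, RHSu1, RHSv1, WDF, Nat.reduceAdd, Pi.mul_apply]
    ring
  exact e ▸ h.differentiableAt.hasDerivAt

lemma key2 (x t : ℝ) :
    HasDerivAt (fun y => GF f g (y, t)) (WDF f g (x, t)) x := by
  have h : HasDerivAt (fun y => GF f g (y, t)) _ x :=
    ((((((((((((((((((((((((HasDerivAt.const_mul (24 : ℝ) ((((hasDerivAt_DX hf 0 x t).mul (hasDerivAt_DX hf 0 x t)).mul (hasDerivAt_DX hf 0 x t)).mul (hasDerivAt_DX hf 0 x t))).add (HasDerivAt.const_mul ((-88 : ℝ)/3) ((((hasDerivAt_DX hf 0 x t).mul (hasDerivAt_DX hf 0 x t)).mul (hasDerivAt_DX hf 0 x t)).mul (hasDerivAt_DX hg 0 x t)))).add (HasDerivAt.const_mul (-12 : ℝ) (((hasDerivAt_DX hf 0 x t).mul (hasDerivAt_DX hf 0 x t)).mul (hasDerivAt_DX hf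 2 x t)))).add (HasDerivAt.const_mul ((110 : ℝ)/9) ((((hasDerivAt_DX hf 0 x t).mul (hasDerivAt_DX hf 0 x t)).mul (hasDerivAt_DX hg 0 x t)).mul (hasDerivAt_DX hg 0 x t)))).add (HasDerivAt.const_mul ((32 : ℝ)/9) (((hasDerivAt_DX hf 0 x t).mul (hasDerivAt_DX hf 0 x t)).mul (hasDerivAt_DX hg 2 x t)))).add (HasDerivAt.const_mul (24 : ℝ) (((hasDerivAt_DX hf 0 x t).mul (hasDerivAt_DX hf 1 x t)).mul (hasDerivAt_DX hf 1 x t)))).add (HasDerivAt.const_mul ((-130 : ℝ)/9) (((hasDerivAt_DX hf 0 x t).mul (hasDerivAt_DX hf 1 x t)).mul (hasDerivAt_DX hg 1 x t)))).add (HasDerivAt.const_mul ((70 : ℝ)/9) (((hasDerivAt_DX hf 0 x t).mul (hasDerivAt_DX hf 2 x t)).mul (hasDerivAt_DX hg 0 x t)))).add (HasDerivAt.const_mul ((-19 : ℝ)/9) ((((hasDerivAt_DX hf 0 x t).mul (hasDerivAt_DX hg 0 x t)).mul (hasDerivAt_DX hg 0 x t)).mul (hasDerivAt_DX hg 0 x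 t)))).add (HasDerivAt.const_mul ((-20 : ℝ)/9) (((hasDerivAt_DX hf 0 x t).mul (hasDerivAt_DX hg 0 x t)).mul (hasDerivAt_DX hg 2 x t)))).add (HasDerivAt.const_mul ((19 : ℝ)/9) (((hasDerivAt_DX hf 0 x t).mul (hasDerivAt_DX hg 1 x t)).mul (hasDerivAt_DX hg 1 x t)))).add (HasDerivAt.const_mul ((-74 : ℝ)/9) (((hasDerivAt_DX hf 1 x t).mul (hasDerivAt_DX hf 1 x t)).mul (hasDerivAt_DX hg 0 x t)))).add (HasDerivAt.const_mul (-3 : ℝ) ((hasDerivAt_DX hf 1 x t).mul (hasDerivAt_DX hf 3 x t)))).add (HasDerivAt.const_mul ((40 : ℝ)/9) (((hasDerivAt_DX hf 1 x t).mul (hasDerivAt_DX hg 0 x t)).mul (hasDerivAt_DX hg 1 x t)))).add (HasDerivAt.const_mul ((8 : ℝ)/9) ((hasDerivAt_DX hf 1 x t).mul (hasDerivAt_DX hg 3 x t)))).add (HasDerivAt.const_mul ((3 : ℝ)/2) ((hasDerivAt_DX hf 2 x t).mul (hasDerivAt_DX hf 2 x t)))).add (HasDerivAt.const_mul ((-19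 : ℝ)/18) (((hasDerivAt_DX hf 2 x t).mul (hasDerivAt_DX hg 0 x t)).mul (hasDerivAt_DX hg 0 x t)))).add (HasDerivAt.const_mul ((-8 : ℝ)/9) ((hasDerivAt_DX hf 2 x t).mul (hasDerivAt_DX hg 2 x t)))).add (HasDerivAt.const_mul ((8 : ℝ)/9) ((hasDerivAt_DX hf 3 x t).mul (hasDerivAt_DX hg 1 x t)))).add (HasDerivAt.const_mul ((7 : ℝ)/54) ((((hasDerivAt_DX hg 0 x t).mul (hasDerivAt_DX hg 0 x t)).mul (hasDerivAt_DX hg 0 x t)).mul (hasDerivAt_DX hg 0 x t)))).add (HasDerivAt.const_mul ((8 : ℝ)/27) (((hasDerivAt_DX hg 0 x t).mul (hasDerivAt_DX hg 0 x t)).mul (hasDerivAt_DX hg 2 x t)))).add (HasDerivAt.const_mul ((-16 : ℝ)/27) (((hasDerivAt_DX hg 0 x t).mul (hasDerivAt_DX hg 1 x t)).mul (hasDerivAt_DX hg 1 x t)))).add (HasDerivAt.const_mul ((-7 : ℝ)/27) ((hasDerivAt_DX hg 1 x t).mul (hasDerivAt_DX hg 3 x t)))).add (HasDerivAt.const_mul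 ((7 : ℝ)/54) ((hasDerivAt_DX hg 2 x t).mul (hasDerivAt_DX hg 2 x t))))
  have e : deriv (fun y => GF f g (y, t)) x = WDF f g (x, t) := by
    rw [h.deriv]
    simp only [WDF, Nat.reduceAdd, Pi.mul_apply]
    ring
  exact e ▸ h.differentiableAt.hasDerivAt

end Main
section Main2
variable {f g : ℝ × ℝ → ℝ} (hf : ContDiff ℝ (⊤ : ℕ∞) f) (hg : ContDiff ℝ (⊤ : ℕ∞) g)

include hf hg in
lemma main (hft : ∀ p, D2 (DX f 0) p = RHSu f g p)
    (hgt : ∀ p, D2 (DX g 0) p = RHSv f g p)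
    {K : Set ℝ} (hK : IsCompact K)
    (hfK : ∀ t x, x ∉ K → f (x, t) = 0) (hgK : ∀ t x, x ∉ K → g (x, t) = 0) :
    ∀ t₁ t₂ : ℝ, (∫ x : ℝ, HD f g (x, t₁)) = ∫ x : ℝ, HD f g (x, t₂) := by
  have hjf := DX_zero_of_support hf hK.isClosed hfK
  have hjg := DX_zero_of_support hg hK.isClosed hgK
  have suppHD : ∀ t x, x ∉ K → HD f g (x, t) = 0 := by
    intro t x hx
    simp only [HD]
    rw [hjf 0 t x hx, hjf 1 t x hx, hjg 0 t x hx, hjg 1 t x hx]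
    ring
  have suppWDF : ∀ t x, x ∉ K → WDF f g (x, t) = 0 := by
    intro t x hx
    simp only [WDF]
    rw [hjf 0 t x hx, hjf 1 t x hx, hjf 2 t x hx, hjf 3 t x hx, hjf 4 t x hx,
      hjg 0 t x hx, hjg 1 t x hx, hjg 2 t x hx, hjg 3 t x hx, hjg 4 t x hx]
    ring
  have suppGF : ∀ t x, x ∉ K → GF f g (x, t) = 0 := by
    intro t x hx
    simp only [GF]
    rw [hjf 0 t x hx, hjf 1 t x hx, hjf 2 t x hx, hjf 3 t x hx,
      hjg 0 t x hx, hjg 1 t x hx, hjg 2 t x hx, hjg 3 t x hx]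
    ring
  have cHD : Continuous (HD f g) := (smooth_HD hf hg).continuous
  have cWDF : Continuous (WDF f g) := (smooth_WDF hf hg).continuous
  have slice_cont : ∀ (h : ℝ × ℝ → ℝ), Continuous h → ∀ t : ℝ,
      Continuous (fun x => h (x, t)) := fun h hh t =>
    hh.comp (continuous_id.prodMk continuous_const)
  -- the integral of WDF over ℝ vanishes
  have hzero : ∀ t : ℝ, (∫ x : ℝ, WDF f g (x, t)) = 0 := by
    intro t
    obtain ⟨r, hr⟩ := hK.isBounded.subset_closedBall (0 : ℝ)
    set a : ℝ := -(|r| + 1) with ha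
    set b : ℝ := |r| + 1 with hb
    have hab : a ≤ b := by
      have := abs_nonneg r
      simp only [ha, hb]; linarith
    have hKsub : K ⊆ Set.Ioo a b := by
      intro x hx
      have := hr hx
      rw [Metric.mem_closedBall, Real.dist_eq, sub_zero] at this
      have h1 := le_abs_self r
      have h2 := (abs_le.mp this).1
      have h3 := (abs_le.mp this).2
      have h4 := neg_abs_le r
      constructor <;> simp only [ha, hb] <;> linarith
    have hnotK : ∀ x, x ∉ Set.Ioc a b → x ∉ K := fun x hx hxK =>
      hx (Set.Ioo_subset_Ioc_self (hKsub hxK))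
    rw [← setIntegral_eq_integral_of_forall_compl_eq_zero
        (fun x hx => suppWDF t x (hnotK x hx)),
      ← intervalIntegral.integral_of_le hab,
      intervalIntegral.integral_eq_sub_of_hasDerivAt
        (fun x _ => key2 hf hg x t)
        ((slice_cont _ cWDF t).intervalIntegrable a b)]
    rw [suppGF t b (fun hb' => by have := (hKsub hb').2; simp only [hb] at this; linarith),
      suppGF t a (fun ha' => by have := (hKsub ha').1; simp only [ha] at this; linarith)]
    ring
  -- derivative of the functional is zero
  have hF0 : ∀ t₀ : ℝ, HasDerivAt (fun t => ∫ x : ℝ, HD f g (x, t)) 0 t₀ := by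
    intro t₀
    obtain ⟨C, hC⟩ := (hK.prod (isCompact_Icc : IsCompact (Set.Icc (t₀ - 1) (t₀ + 1)))).exists_bound_of_continuousOn cWDF.continuousOn
    have h := hasDerivAt_integral_of_dominated_loc_of_deriv_le
      (F := fun t x => HD f g (x, t)) (F' := fun t x => WDF f g (x, t))
      (bound := K.indicator fun _ => C) (s := Metric.ball t₀ 1) (μ := volume) (Metric.ball_mem_nhds t₀ one_pos)
      (Filter.Eventually.of_forall fun t => (slice_cont _ cHD t).aestronglyMeasurable)
      (((slice_cont _ cHD t₀).integrable_of_hasCompactSupport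
        (HasCompactSupport.intro hK (fun x hx => suppHD t₀ x hx))))
      ((slice_cont _ cWDF t₀).aestronglyMeasurable)
      (Filter.Eventually.of_forall fun x => by
        intro s hs
        by_cases hx : x ∈ K
        · rw [Set.indicator_of_mem hx]
          refine hC (x, s) ⟨hx, ?_⟩
          rw [Metric.mem_ball, Real.dist_eq] at hs
          have := abs_lt.mp hs
          constructor <;> linarith [this.1, this.2]
        · have h0 : WDF f g (x, s) = 0 := suppWDF s x hx
          simp [Set.indicator_of_notMem hx, h0])
      ((integrableOn_const hK.measure_lt_top.ne).integrable_indicator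
        hK.measurableSet)
      (Filter.Eventually.of_forall fun x => fun s _ => key1 hf hg hft hgt x s)
    have := h.2
    rwa [hzero t₀] at this
  intro t₁ t₂
  exact is_const_of_deriv_eq_zero (fun t => (hF0 t).differentiableAt)
    (fun t => (hF0 t).deriv) t₁ t₂

end Main2
end KKS6

open MeasureTheory

/-- For any smooth solution `(u, v)` of the KKS system whose `x`-supports
are contained in a fixed compact set `K` for all times, the functional
`ℋ₂ = ∫ ((7/162)v³ − (8/3)u³ − (5/9)v²u + (20/9)u²v − u_x² + (5/9)u_x v_x − (2/27)v_x²) dx`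
is conserved in time. -/
theorem kks_conserved_H2 (u v : ℝ → ℝ → ℝ)
    (hu : ContDiff ℝ (⊤ : ℕ∞) (Function.uncurry u)) (hv : ContDiff ℝ (⊤ : ℕ∞) (Function.uncurry v))
    (hut : ∀ x t : ℝ, deriv (fun s => u x s) t
      = 4 * iteratedDeriv 3 (fun y => u y t) x - iteratedDeriv 3 (fun y => v y t) x
        - 12 * u x t * deriv (fun y => u y t) x + v x t * deriv (fun y => u y t) x
        + 2 * u x t * deriv (fun y => v y t) x)
    (hvt : ∀ x t : ℝ, deriv (fun s => v x s) t
      = 9 * iteratedDeriv 3 (fun y => u y t) x - 2 * iteratedDeriv 3 (fun y => v y t) x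
        - 12 * v x t * deriv (fun y => u y t) x - 6 * u x t * deriv (fun y => v y t) x
        + 4 * v x t * deriv (fun y => v y t) x)
    (K : Set ℝ) (hK : IsCompact K)
    (hsupp : ∀ t : ℝ, (Function.support fun x => u x t) ⊆ K ∧
                      (Function.support fun x => v x t) ⊆ K) :
    ∀ t₁ t₂ : ℝ,
      (∫ x : ℝ,
        ((7 / 162) * (v x t₁) ^ 3 - (8 / 3) * (u x t₁) ^ 3
          - (5 / 9) * (v x t₁) ^ 2 * u x t₁ + (20 / 9) * (u x t₁) ^ 2 * v x t₁
          - (deriv (fun y => u y t₁) x) ^ 2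
          + (5 / 9) * deriv (fun y => u y t₁) x * deriv (fun y => v y t₁) x
          - (2 / 27) * (deriv (fun y => v y t₁) x) ^ 2))
      = ∫ x : ℝ,
        ((7 / 162) * (v x t₂) ^ 3 - (8 / 3) * (u x t₂) ^ 3
          - (5 / 9) * (v x t₂) ^ 2 * u x t₂ + (20 / 9) * (u x t₂) ^ 2 * v x t₂
          - (deriv (fun y => u y t₂) x) ^ 2
          + (5 / 9) * deriv (fun y => u y t₂) x * deriv (fun y => v y t₂) x
          - (2 / 27) * (deriv (fun y => v y t₂) x) ^ 2) := by
  have e1u : ∀ x t : ℝ, deriv (fun y => u y t) x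
      = KKS6.DX (Function.uncurry u) 1 (x, t) :=
    fun x t => (KKS6.hasDerivAt_DX hu 0 x t).deriv
  have e1v : ∀ x t : ℝ, deriv (fun y => v y t) x
      = KKS6.DX (Function.uncurry v) 1 (x, t) :=
    fun x t => (KKS6.hasDerivAt_DX hv 0 x t).deriv
  have e3u : ∀ x t : ℝ, iteratedDeriv 3 (fun y => u y t) x
      = KKS6.DX (Function.uncurry u) 3 (x, t) :=
    fun x t => KKS6.iteratedDeriv_three hu x t
  have e3v : ∀ x t : ℝ, iteratedDeriv 3 (fun y => v y t) x
      = KKS6.DX (Function.uncurry v) 3 (x, t) :=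
    fun x t => KKS6.iteratedDeriv_three hv x t
  have e0u : ∀ x t : ℝ, u x t = KKS6.DX (Function.uncurry u) 0 (x, t) := fun _ _ => rfl
  have e0v : ∀ x t : ℝ, v x t = KKS6.DX (Function.uncurry v) 0 (x, t) := fun _ _ => rfl
  have hft : ∀ p, KKS6.D2 (KKS6.DX (Function.uncurry u) 0) p
      = KKS6.RHSu (Function.uncurry u) (Function.uncurry v) p := by
    rintro ⟨x, t⟩
    have h1 : KKS6.D2 (KKS6.DX (Function.uncurry u) 0) (x, t)
        = deriv (fun s => u x s) t :=
      ((KKS6.hasDerivAt_sliceT (KKS6.contDiff_DX hu 0) x t).deriv).symm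
    have h2 := hut x t
    rw [e3u x t, e3v x t, e1u x t, e1v x t, e0u x t, e0v x t] at h2
    rw [h1, h2]
    simp only [KKS6.RHSu]
    ring
  have hgt : ∀ p, KKS6.D2 (KKS6.DX (Function.uncurry v) 0) p
      = KKS6.RHSv (Function.uncurry u) (Function.uncurry v) p := by
    rintro ⟨x, t⟩
    have h1 : KKS6.D2 (KKS6.DX (Function.uncurry v) 0) (x, t)
        = deriv (fun s => v x s) t :=
      ((KKS6.hasDerivAt_sliceT (KKS6.contDiff_DX hv 0) x t).deriv).symm
    have h2 := hvt x t
    rw [e3u x t, e3v x t, e1u x t, e1v x t, e0u x t, e0v x t] at h2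
    rw [h1, h2]
    simp only [KKS6.RHSv]
    ring
  have hfK : ∀ t x : ℝ, x ∉ K → Function.uncurry u (x, t) = 0 := fun t x hx => by
    by_contra h
    exact hx ((hsupp t).1 (Function.mem_support.mpr h))
  have hgK : ∀ t x : ℝ, x ∉ K → Function.uncurry v (x, t) = 0 := fun t x hx => by
    by_contra h
    exact hx ((hsupp t).2 (Function.mem_support.mpr h))
  have hmain := KKS6.main hu hv hft hgt hK hfK hgK
  have hI : ∀ t : ℝ,
      (∫ x : ℝ,
        ((7 / 162) * (v x t) ^ 3 - (8 / 3) * (u x t) ^ 3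
          - (5 / 9) * (v x t) ^ 2 * u x t + (20 / 9) * (u x t) ^ 2 * v x t
          - (deriv (fun y => u y t) x) ^ 2
          + (5 / 9) * deriv (fun y => u y t) x * deriv (fun y => v y t) x
          - (2 / 27) * (deriv (fun y => v y t) x) ^ 2))
      = ∫ x : ℝ, KKS6.HD (Function.uncurry u) (Function.uncurry v) (x, t) := by
    intro t
    congr 1
    funext x
    rw [e1u x t, e1v x t, e0u x t, e0v x t]
    simp only [KKS6.HD]
    ring
  intro t₁ t₂
  rw [hI t₁, hI t₂]
  exact hmain t₁ t₂
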